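/- arXiv:2601.06918 — 2 statements merged into one kernel-verified Lean document; each statement's English description precedes it below -/
import Mathlib

section
/- For the function K(a,x) = (1−a)x + κ·(x²/4)·[(1−a)² + (h(x)−1)(h(x)−i)] with h(x) = 4/(1+√(1−2x))², fixed a ∈ (0,1), fixed i ∈ {0,1}: K is continuous and strictly increasing in x on [0, 1/2], and monotone nondecreasing in κ; consequently, for 0 ≤ κ < κ′ ≤ 1, the quantity x_κ(a) = sup{x ∈ [0,1/2] : K_κ(a,x) ≤ a} satisfies x_{κ′}(a) ≤ x_κ(a). -/
/-- With h(x) = 4/(1+√(1−2x))² and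
K_κ(a,x) = (1−a)x + κ(x²/4)[(1−a)² + (h(x)−1)(h(x)−i)], for fixed a ∈ (0,1) and
i ∈ {0,1}: K_κ(a,·) is continuous and strictly increasing on [0,1/2] for each
κ ∈ [0,1], K is nondecreasing in κ, and consequently for 0 ≤ κ < κ' ≤ 1 the sups
x_κ(a) = sup{x ∈ [0,1/2] : K_κ(a,x) ≤ a} satisfy x_{κ'}(a) ≤ x_κ(a). -/
theorem stmt_14 (a i : ℝ) (ha0 : 0 < a) (ha1 : a < 1) (hi : i = 0 ∨ i = 1)
    (h : ℝ → ℝ) (hh : ∀ x, h x = 4 / (1 + Real.sqrt (1 - 2 * x)) ^ 2)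
    (K : ℝ → ℝ → ℝ)
    (hK : ∀ κ x, K κ x =
      (1 - a) * x + κ * (x ^ 2 / 4) * ((1 - a) ^ 2 + (h x - 1) * (h x - i))) :
    (∀ κ, 0 ≤ κ → κ ≤ 1 →
        ContinuousOn (K κ) (Set.Icc 0 (1 / 2)) ∧
        StrictMonoOn (K κ) (Set.Icc 0 (1 / 2))) ∧
    (∀ κ κ', 0 ≤ κ → κ ≤ κ' → κ' ≤ 1 →
        ∀ x ∈ Set.Icc (0 : ℝ) (1 / 2), K κ x ≤ K κ' x) ∧
    (∀ κ κ', 0 ≤ κ → κ < κ' → κ' ≤ 1 →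
        sSup {x : ℝ | x ∈ Set.Icc (0 : ℝ) (1 / 2) ∧ K κ' x ≤ a} ≤
          sSup {x : ℝ | x ∈ Set.Icc (0 : ℝ) (1 / 2) ∧ K κ x ≤ a}) := by
  have hi1 : 0 ≤ i ∧ i ≤ 1 := by rcases hi with h'|h' <;> norm_num [h']
  have hden : ∀ x : ℝ, (0:ℝ) < (1 + Real.sqrt (1 - 2 * x)) ^ 2 := by
    intro x
    have := Real.sqrt_nonneg (1 - 2 * x)
    positivity
  have hge1 : ∀ x : ℝ, 0 ≤ x → 1 ≤ h x := by
    intro x hx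
    rw [hh, le_div_iff₀ (hden x)]
    have hs1 : Real.sqrt (1 - 2 * x) ≤ 1 := Real.sqrt_le_one.mpr (by linarith)
    have hs0 := Real.sqrt_nonneg (1 - 2 * x)
    nlinarith
  have hmono : ∀ x y : ℝ, 0 ≤ x → x ≤ y → h x ≤ h y := by
    intro x y hx hxy
    rw [hh, hh]
    apply div_le_div_of_nonneg_left (by norm_num) (hden y)
    have hs : Real.sqrt (1 - 2 * y) ≤ Real.sqrt (1 - 2 * x) :=
      Real.sqrt_le_sqrt (by linarith)
    have h0 := Real.sqrt_nonneg (1 - 2 * y)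
    nlinarith
  -- the bracket term
  have hB0 : ∀ x : ℝ, 0 ≤ x → 0 ≤ (1 - a) ^ 2 + (h x - 1) * (h x - i) := by
    intro x hx
    have := hge1 x hx
    nlinarith [hi1.2, sq_nonneg (1 - a)]
  have hBmono : ∀ x y : ℝ, 0 ≤ x → x ≤ y →
      (1 - a) ^ 2 + (h x - 1) * (h x - i) ≤ (1 - a) ^ 2 + (h y - 1) * (h y - i) := by
    intro x y hx hxy
    have h1 := hge1 x hx
    have h2 := hge1 y (le_trans hx hxy)
    have h3 := hmono x y hx hxy
    nlinarith [hi1.2, mul_nonneg (by linarith : (0:ℝ) ≤ h y - h x)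
      (by linarith : (0:ℝ) ≤ h y + h x - 1 - i)]
  have hkey : ∀ x y : ℝ, 0 ≤ x → x ≤ y →
      x ^ 2 * ((1 - a) ^ 2 + (h x - 1) * (h x - i)) ≤
      y ^ 2 * ((1 - a) ^ 2 + (h y - 1) * (h y - i)) := by
    intro x y hx hxy
    apply mul_le_mul (by nlinarith) (hBmono x y hx hxy) (hB0 x hx) (by positivity)
  have hcont : Continuous h := by
    have he : h = fun x : ℝ => 4 / (1 + Real.sqrt (1 - 2 * x)) ^ 2 := funext hh
    rw [he]
    exact Continuous.div continuous_const (by continuity) fun x => (hden x).ne'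
  have hKle : ∀ κ κ', κ ≤ κ' → 0 ≤ κ → ∀ x ∈ Set.Icc (0:ℝ) (1/2), K κ x ≤ K κ' x := by
    intro κ κ' hκκ hκ x hx
    rw [hK, hK]
    have hB := hB0 x hx.1
    have hx2 : (0:ℝ) ≤ x ^ 2 / 4 := by positivity
    nlinarith [mul_le_mul_of_nonneg_right (mul_le_mul_of_nonneg_right hκκ hx2) hB]
  refine ⟨?_, fun κ κ' hκ hκκ _ => hKle κ κ' hκκ hκ, ?_⟩
  · intro κ hκ0 hκ1
    constructor
    · have he : K κ = fun x => (1 - a) * x + κ * (x ^ 2 / 4) *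
          ((1 - a) ^ 2 + (h x - 1) * (h x - i)) := funext (hK κ)
      rw [he]
      have hc : Continuous fun x : ℝ => (1 - a) * x + κ * (x ^ 2 / 4) *
          ((1 - a) ^ 2 + (h x - 1) * (h x - i)) :=
        (continuous_const.mul continuous_id).add
          ((continuous_const.mul ((continuous_pow 2).div_const 4)).mul
            (continuous_const.add
              ((hcont.sub continuous_const).mul (hcont.sub continuous_const))))
      exact hc.continuousOn
    · intro x hx y hy hxy
      rw [hK, hK]
      have hk := hkey x y hx.1 hxy.le
      have := mul_le_mul_of_nonneg_left hk hκ0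
      nlinarith
  · intro κ κ' hκ hκκ hκ'
    set S := {x : ℝ | x ∈ Set.Icc (0:ℝ) (1/2) ∧ K κ x ≤ a}
    set S' := {x : ℝ | x ∈ Set.Icc (0:ℝ) (1/2) ∧ K κ' x ≤ a}
    have h0 : ∀ μ : ℝ, K μ 0 = 0 := by intro μ; rw [hK]; ring
    have hsub : S' ⊆ S := by
      intro x hx
      exact ⟨hx.1, le_trans (hKle κ κ' hκκ.le hκ x hx.1) hx.2⟩
    have hbdd : BddAbove S := ⟨1/2, fun x hx => hx.1.2⟩
    have hne : S'.Nonempty := ⟨0, ⟨by norm_num, by rw [h0]; linarith⟩⟩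
    exact csSup_le_csSup hbdd hne hsub
end

section
/- Let G = (V,E) be a finite simple graph and for subsets W ⊆ V let F_W(z) = Σ_{F ∈ 𝔉_W} z^{|F|}, where 𝔉_W is the set of Penrose forests of the induced subgraph G|_W (including the empty forest). Then for any nonempty S ⊆ U ⊆ V: F_U(z) = Σ_{F ∈ 𝔉_{U,S}} z^{|F|} F_{U∖(S ∪ V_F)}(z), where 𝔉_{U,S} is the set of Penrose forests of G|_U each of whose trees contains at least one vertex of S (empty forest included), and V_F denotes the vertex set covered by F. -/
open scoped Classical

section Penrose

variable {V : Type*}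

/-- The induced restriction of `G` to a subset `U`, viewed as a graph on `V`
(vertices outside `U` become isolated). -/
def restrictGraph (G : SimpleGraph V) (U : Set V) : SimpleGraph V where
  Adj x y := G.Adj x y ∧ x ∈ U ∧ y ∈ U
  symm := ⟨fun _ _ ⟨h, hx, hy⟩ => ⟨h.symm, hy, hx⟩⟩
  loopless := ⟨fun x ⟨h, _, _⟩ => G.irrefl h⟩

/-- The graph on `V` whose edges are the members of the finite edge set `F`. -/
def edgeGraph (F : Finset (Sym2 V)) : SimpleGraph V :=
  SimpleGraph.fromEdgeSet (F : Set (Sym2 V))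

/-- The support `V_F` of an edge set: the vertices covered by its edges. -/
def suppF (F : Finset (Sym2 V)) : Set V := {x | ∃ e ∈ F, x ∈ e}

/-- `F` is a forest in the graph `G`: a set of edges of `G` spanning no cycle. -/
def IsForestIn (G : SimpleGraph V) (F : Finset (Sym2 V)) : Prop :=
  (F : Set (Sym2 V)) ⊆ G.edgeSet ∧ (edgeGraph F).IsAcyclic

/-- The root of the tree of the forest `F` containing `x`: the least vertex of the
connected component of `x` in the graph of `F`. -/
noncomputable def rootOf [Fintype V] [LinearOrder V] (F : Finset (Sym2 V)) (x : V) : V :=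
  ((Set.toFinite {y | (edgeGraph F).Reachable x y}).toFinset).min'
    ⟨x, by simp [Set.Finite.mem_toFinset]⟩

/-- The depth of `x` in its tree of the forest `F` (distance to the root of its
component). -/
noncomputable def depthF [Fintype V] [LinearOrder V] (F : Finset (Sym2 V)) (x : V) : ℕ :=
  (edgeGraph F).dist (rootOf F x) x

/-- `F` is a Penrose forest of `G` (with each tree rooted at its least vertex):
`F` is a forest in `G` and for every edge `{x,y}` of `G` joining two vertices of a
same tree of `F` but not belonging to `F`, the depths of `x` and `y` differ, and if
`d(y) = d(x) − 1` then `y` precedes the father of `x` (and symmetrically). -/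
def IsPenroseForestIn [Fintype V] [LinearOrder V] (G : SimpleGraph V)
    (F : Finset (Sym2 V)) : Prop :=
  IsForestIn G F ∧
  ∀ x y : V, G.Adj x y → (edgeGraph F).Reachable x y → s(x, y) ∉ F →
    depthF F x ≠ depthF F y ∧
    (depthF F y + 1 = depthF F x →
      ∀ p : V, (edgeGraph F).Adj x p → depthF F p + 1 = depthF F x → y < p)

/-- The Penrose forest generating polynomial `F_W(z)` of the induced subgraph
`G|_W` (the empty forest contributes 1). -/
noncomputable def penroseGenFun [Fintype V] [LinearOrder V] (G : SimpleGraph V)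
    (W : Set V) (z : ℂ) : ℂ :=
  ∑ F ∈ Finset.univ.filter
      (fun F : Finset (Sym2 V) => IsPenroseForestIn (restrictGraph G W) F),
    z ^ F.card

end Penrose

/-!
Every tree of a forest either meets `S` or avoids it. Whether two vertices are joined,
the root of a vertex and its depth can all be read inside the tree of the vertex, so a
forest whose parts have disjoint vertex sets is Penrose iff each part is; and being
Penrose in `G|_W` only asks that the forest be Penrose in `G` and live on `W`. Hence
`F ↦ (F₁, F₂)`, with `F₁` the trees meeting `S` and `F₂` the others, is a bijection from
the Penrose forests of `G|_U` onto the pairs with `F₁ ∈ 𝔉_{U,S}` and `F₂` a Penrose forest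
of `G|_{U ∖ (S ∪ V_{F₁})}`, with inverse `(F₁, F₂) ↦ F₁ ∪ F₂`, and `|F| = |F₁| + |F₂|`.
-/

section EdgeGraph

variable {V : Type*} {F F₁ F₂ : Finset (Sym2 V)} {x y : V}

lemma edgeGraph_adj : (edgeGraph F).Adj x y ↔ s(x, y) ∈ F ∧ x ≠ y :=
  SimpleGraph.fromEdgeSet_adj _

lemma edgeGraph_mono (h : F₁ ⊆ F₂) : edgeGraph F₁ ≤ edgeGraph F₂ :=
  SimpleGraph.fromEdgeSet_mono (Finset.coe_subset.mpr h)

lemma suppF_mono (h : F₁ ⊆ F₂) : suppF F₁ ⊆ suppF F₂ :=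
  fun _ ⟨e, he, hx⟩ => ⟨e, h he, hx⟩

lemma mem_suppF_of_adj (h : (edgeGraph F).Adj x y) : y ∈ suppF F :=
  ⟨s(x, y), (edgeGraph_adj.mp h).1, Sym2.mem_mk_right x y⟩

lemma mem_suppF_of_reachable (h : (edgeGraph F).Reachable x y) (hne : x ≠ y) :
    y ∈ suppF F := by
  obtain ⟨p⟩ := h.symm
  cases p with
  | nil => exact absurd rfl hne
  | cons hadj _ => exact mem_suppF_of_adj hadj.symm

lemma reachable_of_mem_of_mem {e : Sym2 V} (he : e ∈ F) (hx : x ∈ e) (hy : y ∈ e) :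
    (edgeGraph F).Reachable x y := by
  rcases eq_or_ne x y with rfl | hne
  · rfl
  · exact (edgeGraph_adj.mpr ⟨(Sym2.mem_and_mem_iff hne).mp ⟨hx, hy⟩ ▸ he, hne⟩).reachable

lemma notMem_suppF_of_reachable_left (hdis : Disjoint (suppF F₁) (suppF F₂))
    (hx : x ∉ suppF F₂) (h : (edgeGraph F₁).Reachable x y) : y ∉ suppF F₂ := by
  rcases eq_or_ne x y with rfl | hne
  · exact hx
  · exact Set.disjoint_left.mp hdis (mem_suppF_of_reachable h hne)

lemma disjoint_of_disjoint_suppF (hdis : Disjoint (suppF F₁) (suppF F₂)) : Disjoint F₁ F₂ := by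
  rw [Finset.disjoint_left]
  intro e h₁ h₂
  induction e with
  | _ a b =>
    exact Set.disjoint_left.mp hdis ⟨_, h₁, Sym2.mem_mk_left a b⟩ ⟨_, h₂, Sym2.mem_mk_left a b⟩

lemma coe_subset_edgeSet_restrictGraph_iff {G : SimpleGraph V} {W : Set V} :
    (F : Set (Sym2 V)) ⊆ (restrictGraph G W).edgeSet ↔
      (F : Set (Sym2 V)) ⊆ G.edgeSet ∧ suppF F ⊆ W := by
  refine ⟨fun h => ⟨fun e he => ?_, fun x ⟨e, he, hx⟩ => ?_⟩, fun ⟨hG, hW⟩ e he => ?_⟩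
  · induction e with
    | _ a b => exact (h he).1
  · induction e with
    | _ a b =>
      rcases Sym2.mem_iff.mp hx with rfl | rfl
      exacts [(h he).2.1, (h he).2.2]
  · induction e with
    | _ a b => exact ⟨hG he, hW ⟨_, he, Sym2.mem_mk_left a b⟩, hW ⟨_, he, Sym2.mem_mk_right a b⟩⟩

variable [DecidableEq V]

lemma suppF_union : suppF (F₁ ∪ F₂) = suppF F₁ ∪ suppF F₂ := by
  ext x
  simp only [suppF, Set.mem_ofPred_eq, Set.mem_union, Finset.mem_union, or_and_right,
    exists_or]

lemma adj_union_left_iff (hx : x ∉ suppF F₂) :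
    (edgeGraph (F₁ ∪ F₂)).Adj x y ↔ (edgeGraph F₁).Adj x y := by
  simp only [edgeGraph_adj, Finset.mem_union, and_congr_left_iff, or_iff_left_iff_imp]
  exact fun _ h => absurd ⟨_, h, Sym2.mem_mk_left x y⟩ hx

/-- The walk never enters `V_{F₂}`: each step lands in `V_{F₁}`. -/
lemma edges_subset_left_of_notMem_suppF (hdis : Disjoint (suppF F₁) (suppF F₂))
    (p : (edgeGraph (F₁ ∪ F₂)).Walk x y) (hx : x ∉ suppF F₂) :
    ∀ e ∈ p.edges, e ∈ (edgeGraph F₁).edgeSet := by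
  induction p with
  | nil => simp
  | cons h p ih =>
    have h₁ := (adj_union_left_iff hx).mp h
    simp only [SimpleGraph.Walk.edges_cons, List.mem_cons, forall_eq_or_imp]
    exact ⟨h₁, ih (Set.disjoint_left.mp hdis (mem_suppF_of_adj h₁))⟩

lemma reachable_union_left_iff (hdis : Disjoint (suppF F₁) (suppF F₂))
    (hx : x ∉ suppF F₂) :
    (edgeGraph (F₁ ∪ F₂)).Reachable x y ↔ (edgeGraph F₁).Reachable x y :=
  ⟨fun ⟨p⟩ => ⟨p.transfer _ (edges_subset_left_of_notMem_suppF hdis p hx)⟩,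
    fun h => h.mono (edgeGraph_mono Finset.subset_union_left)⟩

lemma dist_union_left (hdis : Disjoint (suppF F₁) (suppF F₂)) (hx : x ∉ suppF F₂) :
    (edgeGraph (F₁ ∪ F₂)).dist x y = (edgeGraph F₁).dist x y := by
  by_cases hr : (edgeGraph (F₁ ∪ F₂)).Reachable x y
  · refine le_antisymm
      (((reachable_union_left_iff hdis hx).mp hr).dist_anti
        (edgeGraph_mono Finset.subset_union_left)) ?_
    obtain ⟨p, hp⟩ := hr.exists_walk_length_eq_dist
    calc (edgeGraph F₁).dist x y
        ≤ (p.transfer _ (edges_subset_left_of_notMem_suppF hdis p hx)).length :=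
          SimpleGraph.dist_le _
      _ = (edgeGraph (F₁ ∪ F₂)).dist x y := by rw [SimpleGraph.Walk.length_transfer, hp]
  · rw [SimpleGraph.dist_eq_zero_of_not_reachable hr, SimpleGraph.dist_eq_zero_of_not_reachable
      (mt (reachable_union_left_iff hdis hx).mpr hr)]

lemma isAcyclic_union_iff (hdis : Disjoint (suppF F₁) (suppF F₂)) :
    (edgeGraph (F₁ ∪ F₂)).IsAcyclic ↔ (edgeGraph F₁).IsAcyclic ∧ (edgeGraph F₂).IsAcyclic := by
  refine ⟨fun h => ⟨h.anti (edgeGraph_mono Finset.subset_union_left),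
    h.anti (edgeGraph_mono Finset.subset_union_right)⟩, fun ⟨h₁, h₂⟩ v c hc => ?_⟩
  by_cases hv : v ∈ suppF F₂
  · have hle := edgeGraph_mono (Finset.union_comm F₁ F₂).le
    exact h₂ ((c.mapLe hle).transfer _ (edges_subset_left_of_notMem_suppF hdis.symm _
      (Set.disjoint_right.mp hdis hv))) ((hc.mapLe hle).transfer _)
  · exact h₁ (c.transfer _ (edges_subset_left_of_notMem_suppF hdis c hv)) (hc.transfer _)

end EdgeGraph

section PenroseCond

variable {V : Type*} [Fintype V] [LinearOrder V] {G : SimpleGraph V}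
  {F F₁ F₂ : Finset (Sym2 V)} {x y : V}

/-- The clause of `IsPenroseForestIn` for the pair `(x, y)`. -/
def PenroseCondAt (G : SimpleGraph V) (F : Finset (Sym2 V)) (x y : V) : Prop :=
  G.Adj x y → (edgeGraph F).Reachable x y → s(x, y) ∉ F →
    depthF F x ≠ depthF F y ∧
    (depthF F y + 1 = depthF F x →
      ∀ p : V, (edgeGraph F).Adj x p → depthF F p + 1 = depthF F x → y < p)

lemma isPenroseForestIn_iff :
    IsPenroseForestIn G F ↔ IsForestIn G F ∧ ∀ x y, PenroseCondAt G F x y :=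
  Iff.rfl

lemma penroseCondAt_of_notMem_suppF (hx : x ∉ suppF F) : PenroseCondAt G F x y :=
  fun hadj hr => absurd (mem_suppF_of_reachable hr.symm hadj.ne.symm) hx

lemma isPenroseForestIn_restrictGraph_iff {W : Set V} :
    IsPenroseForestIn (restrictGraph G W) F ↔ IsPenroseForestIn G F ∧ suppF F ⊆ W := by
  have hcond (hW : suppF F ⊆ W) (x y : V) :
      PenroseCondAt (restrictGraph G W) F x y ↔ PenroseCondAt G F x y :=
    ⟨fun h hadj hr => h ⟨hadj, hW (mem_suppF_of_reachable hr.symm hadj.ne.symm),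
      hW (mem_suppF_of_reachable hr hadj.ne)⟩ hr, fun h hadj => h hadj.1⟩
  simp only [isPenroseForestIn_iff, IsForestIn, coe_subset_edgeSet_restrictGraph_iff]
  constructor
  · rintro ⟨⟨⟨hG, hW⟩, hF⟩, hc⟩
    exact ⟨⟨⟨hG, hF⟩, fun x y => (hcond hW x y).mp (hc x y)⟩, hW⟩
  · rintro ⟨⟨⟨hG, hF⟩, hc⟩, hW⟩
    exact ⟨⟨⟨hG, hW⟩, hF⟩, fun x y => (hcond hW x y).mpr (hc x y)⟩

lemma reachable_rootOf (F : Finset (Sym2 V)) (x : V) :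
    (edgeGraph F).Reachable x (rootOf F x) := by
  simpa [rootOf] using
    Finset.min'_mem ((Set.toFinite {y | (edgeGraph F).Reachable x y}).toFinset) ⟨x, by simp⟩

variable [DecidableEq V]

lemma rootOf_union_left (hdis : Disjoint (suppF F₁) (suppF F₂)) (hx : x ∉ suppF F₂) :
    rootOf (F₁ ∪ F₂) x = rootOf F₁ x := by
  unfold rootOf
  congr 1
  ext y
  simpa using reachable_union_left_iff hdis hx

lemma depthF_union_left (hdis : Disjoint (suppF F₁) (suppF F₂)) (hx : x ∉ suppF F₂) :
    depthF (F₁ ∪ F₂) x = depthF F₁ x := by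
  rw [depthF, depthF, rootOf_union_left hdis hx, SimpleGraph.dist_comm,
    dist_union_left hdis hx, SimpleGraph.dist_comm]

lemma penroseCondAt_union_left_iff (hdis : Disjoint (suppF F₁) (suppF F₂))
    (hx : x ∉ suppF F₂) : PenroseCondAt G (F₁ ∪ F₂) x y ↔ PenroseCondAt G F₁ x y := by
  have hmem : s(x, y) ∈ F₁ ∪ F₂ ↔ s(x, y) ∈ F₁ :=
    Finset.mem_union.trans (or_iff_left fun h => hx ⟨_, h, Sym2.mem_mk_left x y⟩)
  have hdepth {v : V} (hv : (edgeGraph F₁).Reachable x v) :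
      depthF (F₁ ∪ F₂) v = depthF F₁ v :=
    depthF_union_left hdis (notMem_suppF_of_reachable_left hdis hx hv)
  unfold PenroseCondAt
  rw [reachable_union_left_iff hdis hx, hmem]
  refine imp_congr_right fun _ => imp_congr_right fun hr => ?_
  simp only [hdepth (SimpleGraph.Reachable.refl x), hdepth hr, adj_union_left_iff hx]
  exact imp_congr_right fun _ => and_congr_right fun _ => imp_congr_right fun _ =>
    forall_congr' fun p => imp_congr_right fun hp => by rw [hdepth hp.reachable]

lemma penroseCondAt_union_iff (hdis : Disjoint (suppF F₁) (suppF F₂)) :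
    PenroseCondAt G (F₁ ∪ F₂) x y ↔ PenroseCondAt G F₁ x y ∧ PenroseCondAt G F₂ x y := by
  by_cases hx : x ∈ suppF F₂
  · have hx₁ : x ∉ suppF F₁ := Set.disjoint_right.mp hdis hx
    rw [Finset.union_comm, penroseCondAt_union_left_iff hdis.symm hx₁]
    exact ⟨fun h => ⟨penroseCondAt_of_notMem_suppF hx₁, h⟩, And.right⟩
  · rw [penroseCondAt_union_left_iff hdis hx]
    exact ⟨fun h => ⟨h, penroseCondAt_of_notMem_suppF hx⟩, And.left⟩

lemma isPenroseForestIn_union_iff (hdis : Disjoint (suppF F₁) (suppF F₂)) :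
    IsPenroseForestIn G (F₁ ∪ F₂) ↔ IsPenroseForestIn G F₁ ∧ IsPenroseForestIn G F₂ := by
  simp only [isPenroseForestIn_iff, IsForestIn, penroseCondAt_union_iff hdis, forall_and,
    isAcyclic_union_iff hdis, Finset.coe_union, Set.union_subset_iff]
  tauto

end PenroseCond

section TreesMeeting

variable {V : Type*} (S : Set V) {F F₁ F₂ : Finset (Sym2 V)} {x s : V}

noncomputable def treesMeeting (F : Finset (Sym2 V)) : Finset (Sym2 V) :=
  F.filter fun e => ∃ x ∈ e, ∃ s ∈ S, (edgeGraph F).Reachable x s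

noncomputable def treesAvoiding (F : Finset (Sym2 V)) : Finset (Sym2 V) :=
  F.filter fun e => ¬ ∃ x ∈ e, ∃ s ∈ S, (edgeGraph F).Reachable x s

variable {S}

lemma card_treesMeeting_add_card_treesAvoiding :
    (treesMeeting S F).card + (treesAvoiding S F).card = F.card :=
  Finset.card_filter_add_card_filter_not _

lemma exists_reachable_of_mem_suppF_treesMeeting (hx : x ∈ suppF (treesMeeting S F)) :
    ∃ s ∈ S, (edgeGraph F).Reachable x s := by
  obtain ⟨e, he, hxe⟩ := hx
  obtain ⟨heF, y, hye, s, hs, hr⟩ := Finset.mem_filter.mp he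
  exact ⟨s, hs, (reachable_of_mem_of_mem heF hxe hye).trans hr⟩

lemma not_reachable_of_mem_suppF_treesAvoiding (hx : x ∈ suppF (treesAvoiding S F))
    (hs : s ∈ S) : ¬ (edgeGraph F).Reachable x s := by
  obtain ⟨e, he, hxe⟩ := hx
  exact fun hr => (Finset.mem_filter.mp he).2 ⟨x, hxe, s, hs, hr⟩

lemma disjoint_suppF_treesAvoiding :
    Disjoint (suppF (treesAvoiding S F)) (S ∪ suppF (treesMeeting S F)) := by
  refine Set.disjoint_union_right.mpr ⟨Set.disjoint_left.mpr fun x hx hs => ?_,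
    Set.disjoint_left.mpr fun x hx hm => ?_⟩
  · exact not_reachable_of_mem_suppF_treesAvoiding hx hs (.refl _)
  · obtain ⟨s, hs, hr⟩ := exists_reachable_of_mem_suppF_treesMeeting hm
    exact not_reachable_of_mem_suppF_treesAvoiding hx hs hr

lemma disjoint_suppF_treesMeeting_treesAvoiding :
    Disjoint (suppF (treesMeeting S F)) (suppF (treesAvoiding S F)) :=
  (disjoint_suppF_treesAvoiding.mono_right Set.subset_union_right).symm

variable [DecidableEq V]

lemma treesMeeting_union_treesAvoiding : treesMeeting S F ∪ treesAvoiding S F = F :=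
  Finset.filter_union_filter_not_eq _ F

lemma exists_reachable_treesMeeting (hx : x ∈ suppF (treesMeeting S F)) :
    ∃ s ∈ S, (edgeGraph (treesMeeting S F)).Reachable x s := by
  obtain ⟨s, hs, hr⟩ := exists_reachable_of_mem_suppF_treesMeeting hx
  rw [← treesMeeting_union_treesAvoiding (S := S) (F := F)] at hr
  have hdis := disjoint_suppF_treesMeeting_treesAvoiding (S := S) (F := F)
  exact ⟨s, hs, (reachable_union_left_iff hdis (Set.disjoint_left.mp hdis hx)).mp hr⟩

lemma treesMeeting_union (hmeet : ∀ x ∈ suppF F₁, ∃ s ∈ S, (edgeGraph F₁).Reachable x s)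
    (hdis : Disjoint (suppF F₂) (S ∪ suppF F₁)) : treesMeeting S (F₁ ∪ F₂) = F₁ := by
  have hdis₁₂ : Disjoint (suppF F₁) (suppF F₂) := (hdis.mono_right Set.subset_union_right).symm
  ext e
  simp only [treesMeeting, Finset.mem_filter, Finset.mem_union]
  constructor
  · rintro ⟨he | he, x, hxe, s, hs, hr⟩
    · exact he
    · have hs₂ : s ∉ suppF F₂ := fun h => Set.disjoint_left.mp hdis h (Or.inl hs)
      have hr₁ := (reachable_union_left_iff hdis₁₂ hs₂).mp hr.symm
      exact absurd ⟨e, he, hxe⟩ (notMem_suppF_of_reachable_left hdis₁₂ hs₂ hr₁)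
  · intro he
    refine ⟨Or.inl he, ?_⟩
    induction e with
    | _ a b =>
      obtain ⟨s, hs, hr⟩ := hmeet a ⟨_, he, Sym2.mem_mk_left a b⟩
      exact ⟨a, Sym2.mem_mk_left a b, s, hs, hr.mono (edgeGraph_mono Finset.subset_union_left)⟩

lemma treesAvoiding_union (hmeet : ∀ x ∈ suppF F₁, ∃ s ∈ S, (edgeGraph F₁).Reachable x s)
    (hdis : Disjoint (suppF F₂) (S ∪ suppF F₁)) : treesAvoiding S (F₁ ∪ F₂) = F₂ := by
  have hdis₁₂ : Disjoint (suppF F₁) (suppF F₂) := (hdis.mono_right Set.subset_union_right).symm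
  rw [treesAvoiding, Finset.filter_not, ← treesMeeting, treesMeeting_union hmeet hdis,
    Finset.union_sdiff_cancel_left (disjoint_of_disjoint_suppF hdis₁₂)]

variable [Fintype V] [LinearOrder V] {G : SimpleGraph V} {U : Set V}

lemma isPenroseForestIn_treesMeeting_and_treesAvoiding
    (hF : IsPenroseForestIn (restrictGraph G U) F) :
    IsPenroseForestIn (restrictGraph G U) (treesMeeting S F) ∧
      IsPenroseForestIn (restrictGraph G (U \ (S ∪ suppF (treesMeeting S F))))
        (treesAvoiding S F) := by
  simp only [isPenroseForestIn_restrictGraph_iff] at hF ⊢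
  obtain ⟨hP, hU⟩ := hF
  rw [← treesMeeting_union_treesAvoiding (S := S) (F := F)] at hP hU
  rw [isPenroseForestIn_union_iff disjoint_suppF_treesMeeting_treesAvoiding] at hP
  rw [suppF_union, Set.union_subset_iff] at hU
  exact ⟨⟨hP.1, hU.1⟩, hP.2, Set.subset_sdiff.mpr ⟨hU.2, disjoint_suppF_treesAvoiding⟩⟩

lemma isPenroseForestIn_union_of_restrictGraph_sdiff
    (h₁ : IsPenroseForestIn (restrictGraph G U) F₁)
    (h₂ : IsPenroseForestIn (restrictGraph G (U \ (S ∪ suppF F₁))) F₂) :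
    IsPenroseForestIn (restrictGraph G U) (F₁ ∪ F₂) := by
  rw [isPenroseForestIn_restrictGraph_iff] at h₁ h₂ ⊢
  obtain ⟨hU, hdis⟩ := Set.subset_sdiff.mp h₂.2
  rw [isPenroseForestIn_union_iff (hdis.mono_right Set.subset_union_right).symm, suppF_union]
  exact ⟨⟨h₁.1, h₂.1⟩, Set.union_subset h₁.2 hU⟩

end TreesMeeting

theorem stmt_17_general {V : Type*} [Fintype V] [LinearOrder V] (G : SimpleGraph V)
    (U S : Set V) (z : ℂ) :
    penroseGenFun G U z =
      ∑ F ∈ Finset.univ.filter (fun F : Finset (Sym2 V) =>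
          IsPenroseForestIn (restrictGraph G U) F ∧
          ∀ x ∈ suppF F, ∃ s ∈ S, (edgeGraph F).Reachable x s),
        z ^ F.card * penroseGenFun G (U \ (S ∪ suppF F)) z := by
  simp only [penroseGenFun, Finset.mul_sum, ← pow_add]
  rw [Finset.sum_sigma']
  refine Finset.sum_bij' (fun F _ => ⟨treesMeeting S F, treesAvoiding S F⟩)
    (fun p _ => p.1 ∪ p.2) ?_ ?_ ?_ ?_ ?_
  · intro F hF
    simp only [Finset.mem_sigma, Finset.mem_filter, Finset.mem_univ, true_and] at hF ⊢
    obtain ⟨h₁, h₂⟩ := isPenroseForestIn_treesMeeting_and_treesAvoiding (S := S) hF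
    exact ⟨⟨h₁, fun x hx => exists_reachable_treesMeeting hx⟩, h₂⟩
  · rintro ⟨F₁, F₂⟩ hp
    simp only [Finset.mem_sigma, Finset.mem_filter, Finset.mem_univ, true_and] at hp ⊢
    exact isPenroseForestIn_union_of_restrictGraph_sdiff hp.1.1 hp.2
  · intro F _
    exact treesMeeting_union_treesAvoiding
  · rintro ⟨F₁, F₂⟩ hp
    simp only [Finset.mem_sigma, Finset.mem_filter, Finset.mem_univ, true_and] at hp
    have hdis := (Set.subset_sdiff.mp (isPenroseForestIn_restrictGraph_iff.mp hp.2).2).2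
    rw [treesMeeting_union hp.1.2 hdis, treesAvoiding_union hp.1.2 hdis]
  · intro F _
    rw [card_treesMeeting_add_card_treesAvoiding]

/-- For any nonempty S ⊆ U ⊆ V,
F_U(z) = Σ_{F ∈ 𝔉_{U,S}} z^{|F|} · F_{U∖(S ∪ V_F)}(z), where 𝔉_{U,S} is the set of
Penrose forests of G|_U each of whose trees contains a vertex of S. -/
theorem stmt_17 {V : Type*} [Fintype V] [LinearOrder V] (G : SimpleGraph V)
    (U S : Set V) (hS : S.Nonempty) (hSU : S ⊆ U) (z : ℂ) :
    penroseGenFun G U z =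
      ∑ F ∈ Finset.univ.filter (fun F : Finset (Sym2 V) =>
          IsPenroseForestIn (restrictGraph G U) F ∧
          ∀ x ∈ suppF F, ∃ s ∈ S, (edgeGraph F).Reachable x s),
        z ^ F.card * penroseGenFun G (U \ (S ∪ suppF F)) z :=
  stmt_17_general G U S z
end
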